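/- arXiv:2510.15834 — 4 statements merged into one kernel-verified Lean document; each statement's English description precedes it below -/
import Mathlib

section
/- Let n ∈ ℕ, let K ≥ 1 and t ≥ 0 be reals, and let s₁, …, s_{n+1} be nonnegative reals satisfying s_{j+1} ≤ K·s_j^{3/4}·t^{1/2} for every j = 1, …, n. Then s_{n+1} ≤ K⁴·s₁^{(3/4)ⁿ}·t^{2 − 2·(3/4)ⁿ}. -/
/-- Elementary iteration inequality underlying iterated Moser estimates. -/
theorem iterated_power_inequality (n : ℕ) (K t : ℝ) (hK : 1 ≤ K) (ht : 0 ≤ t)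
    (s : Fin (n + 1) → ℝ) (hs : ∀ j, 0 ≤ s j)
    (hstep : ∀ j : Fin n, s j.succ ≤ K * s j.castSucc ^ ((3 : ℝ) / 4) * t ^ ((1 : ℝ) / 2)) :
    s (Fin.last n) ≤ K ^ 4 * s 0 ^ (((3 : ℝ) / 4) ^ n) * t ^ (2 - 2 * ((3 : ℝ) / 4) ^ n) := by
  have hK0 : (0 : ℝ) < K := lt_of_lt_of_le one_pos hK
  induction n with
  | zero =>
    have h2 : (2 : ℝ) - 2 * ((3 : ℝ) / 4) ^ 0 = 0 := by norm_num
    have hK4 : (1 : ℝ) ≤ K ^ 4 := one_le_pow₀ hK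
    rw [h2, Real.rpow_zero, mul_one, pow_zero, Real.rpow_one]
    calc s (Fin.last 0) = s 0 := rfl
    _ ≤ K ^ 4 * s 0 := le_mul_of_one_le_left (hs 0) hK4
  | succ n ih =>
    set e : ℝ := ((3 : ℝ) / 4) ^ n with he
    have he0 : 0 ≤ e := by positivity
    have hf0 : 0 ≤ 2 - 2 * e := by
      have : e ≤ 1 := pow_le_one₀ (by norm_num) (by norm_num)
      linarith
    -- apply ih to the restriction of s
    have hIH : s ((Fin.last n).castSucc) ≤
        K ^ 4 * s 0 ^ e * t ^ (2 - 2 * e) := by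
      have := ih (fun j => s j.castSucc) (fun j => hs _) (fun j => by
        have h := hstep j.castSucc
        rw [Fin.succ_castSucc] at h
        exact h)
      simpa using this
    have hlast := hstep (Fin.last n)
    rw [Fin.succ_last] at hlast
    have hs0 : 0 ≤ s 0 := hs 0
    have hb0 : 0 ≤ K ^ 4 * s 0 ^ e * t ^ (2 - 2 * e) :=
      mul_nonneg (mul_nonneg (by positivity) (Real.rpow_nonneg hs0 _)) (Real.rpow_nonneg ht _)
    have hmono : s ((Fin.last n).castSucc) ^ ((3:ℝ)/4) ≤
        (K ^ 4 * s 0 ^ e * t ^ (2 - 2 * e)) ^ ((3:ℝ)/4) :=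
      Real.rpow_le_rpow (hs _) hIH (by norm_num)
    have hchain : s (Fin.last (n+1)) ≤
        K * (K ^ 4 * s 0 ^ e * t ^ (2 - 2 * e)) ^ ((3:ℝ)/4) * t ^ ((1:ℝ)/2) := by
      refine le_trans hlast ?_
      have ht12 : (0:ℝ) ≤ t ^ ((1:ℝ)/2) := Real.rpow_nonneg ht _
      gcongr
    refine le_trans hchain (le_of_eq ?_)
    rw [Real.mul_rpow (mul_nonneg (by positivity) (Real.rpow_nonneg hs0 _)) (Real.rpow_nonneg ht _),
        Real.mul_rpow (by positivity) (Real.rpow_nonneg hs0 _),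
        ← Real.rpow_natCast K 4, ← Real.rpow_mul hK0.le,
        ← Real.rpow_mul hs0, ← Real.rpow_mul ht,
        show ((4:ℕ):ℝ) * ((3:ℝ)/4) = 3 by norm_num]
    have he1 : e * (3/4) = ((3:ℝ)/4) ^ (n+1) := by rw [he, pow_succ]
    have he2 : (2 - 2 * e) * (3/4) + (1:ℝ)/2 = 2 - 2 * ((3:ℝ)/4) ^ (n+1) := by
      rw [he, pow_succ]; ring
    have hexps : s 0 ^ (e * (3/4)) = s 0 ^ (((3:ℝ)/4) ^ (n+1)) := by rw [he1]
    have hexpt : t ^ ((2 - 2 * e) * (3/4)) * t ^ ((1:ℝ)/2)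
        = t ^ (2 - 2 * ((3:ℝ)/4) ^ (n+1)) := by
      rw [← Real.rpow_add_of_nonneg ht (by linarith) (by norm_num), he2]
    calc K * (K ^ (3:ℝ) * s 0 ^ (e*(3/4)) * t ^ ((2-2*e)*(3/4))) * t ^ ((1:ℝ)/2)
        = K ^ ((4:ℕ):ℝ) * s 0 ^ (e*(3/4)) * (t ^ ((2-2*e)*(3/4)) * t ^ ((1:ℝ)/2)) := by
          rw [show ((4:ℕ):ℝ) = 3+1 by norm_num, Real.rpow_add hK0, Real.rpow_one]; ring
      _ = K ^ ((4:ℕ):ℝ) * s 0 ^ (((3:ℝ)/4)^(n+1)) * t ^ (2 - 2*((3:ℝ)/4)^(n+1)) := by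
          rw [hexps, hexpt]
end

section
/- Let L > 0 and let g : [L, ∞) → ℝ be differentiable. Suppose that for every R > 2L, if g′(R) > 0 then g(R) ≤ g(R/2). Then g(R) ≤ sup_{r ∈ [L, 2L]} g(r) for every R ≥ L. -/
/-- Dichotomy/monotonicity principle: if whenever g′(R) > 0 (for R > 2L) one has
g(R) ≤ g(R/2), then g is bounded by its supremum on the initial interval [L, 2L]. -/
theorem dichotomy_monotonicity_principle (L : ℝ) (hL : 0 < L) (g : ℝ → ℝ)
    (hdiff : DifferentiableOn ℝ g (Set.Ici L))
    (hcond : ∀ R : ℝ, 2 * L < R → 0 < derivWithin g (Set.Ici L) R → g R ≤ g (R / 2)) :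
    ∀ R : ℝ, L ≤ R → g R ≤ sSup (g '' Set.Icc L (2 * L)) := by
  set M := sSup (g '' Set.Icc L (2 * L)) with hM
  have hcont : ContinuousOn g (Set.Ici L) := hdiff.continuousOn
  have hsub : Set.Icc L (2 * L) ⊆ Set.Ici L := fun x hx => hx.1
  have hbdd : BddAbove (g '' Set.Icc L (2 * L)) :=
    (isCompact_Icc.image_of_continuousOn (hcont.mono hsub)).bddAbove
  have key : ∀ n : ℕ, ∀ r : ℝ, L ≤ r → r ≤ 2 ^ n * (2 * L) → g r ≤ M := by
    intro n
    induction n with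
    | zero =>
      intro r h1 h2
      exact le_csSup hbdd ⟨r, ⟨h1, by simpa using h2⟩, rfl⟩
    | succ n ih =>
      intro r h1 h2
      by_cases hr : r ≤ 2 ^ n * (2 * L)
      · exact ih r h1 hr
      push_neg at hr
      set t : ℝ := 2 ^ n * (2 * L) with ht
      have h2t : r ≤ 2 * t := by
        have : (2 : ℝ) ^ (n + 1) * (2 * L) = 2 * t := by rw [ht, pow_succ]; ring
        linarith [h2, this.ge]
      have htL : 2 * L ≤ t := by
        have h1p : (1 : ℝ) ≤ 2 ^ n := one_le_pow₀ (by norm_num : (1:ℝ) ≤ 2)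
        nlinarith
      by_contra hgr
      push_neg at hgr
      set A : Set ℝ := Set.Icc t r ∩ g ⁻¹' Set.Iic M with hA
      have htA : t ∈ A := ⟨⟨le_refl t, hr.le⟩, ih t (by linarith) le_rfl⟩
      have hAne : A.Nonempty := ⟨t, htA⟩
      have hAbdd : BddAbove A := ⟨r, fun u hu => hu.1.2⟩
      have hAclosed : IsClosed A := by
        apply (hcont.mono (fun x hx => (by linarith [hx.1] : L ≤ x))).preimage_isClosed_of_isClosed
          isClosed_Icc isClosed_Iic
      set a : ℝ := sSup A with ha
      have haA : a ∈ A := hAclosed.csSup_mem hAne hAbdd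
      have hga : g a ≤ M := haA.2
      have haIcc : a ∈ Set.Icc t r := haA.1
      have har : a < r := by
        rcases eq_or_lt_of_le haIcc.2 with h | h
        · exact absurd (h ▸ hga) (not_le.2 hgr)
        · exact h
      have hgt : ∀ u : ℝ, a < u → u ≤ r → M < g u := by
        intro u hau hur
        by_contra h
        push_neg at h
        exact absurd (le_csSup hAbdd ⟨⟨haIcc.1.trans hau.le, hur⟩, h⟩) (not_le.2 hau)
      have hderiv : ∀ u ∈ Set.Ioo a r, deriv g u ≤ 0 := by
        intro u hu
        have hu2L : 2 * L < u := lt_of_le_of_lt (htL.trans haIcc.1) hu.1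
        have hnhds : Set.Ici L ∈ nhds u := Ici_mem_nhds (by linarith)
        have hdw : derivWithin g (Set.Ici L) u = deriv g u := derivWithin_of_mem_nhds hnhds
        by_contra h
        push_neg at h
        have hle : g u ≤ g (u / 2) := hcond u hu2L (by rw [hdw]; exact h)
        have hu2 : g (u / 2) ≤ M := ih (u / 2) (by linarith) (by linarith [hu.2])
        exact absurd (hle.trans hu2) (not_le.2 (hgt u hu.1 hu.2.le))
      have hIccsub : Set.Icc a r ⊆ Set.Ici L := fun x hx => by
        have ht1 := haIcc.1
        have ht2 := hx.1
        simp only [Set.mem_Ici]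
        linarith
      have hanti : AntitoneOn g (Set.Icc a r) := by
        apply antitoneOn_of_deriv_nonpos (convex_Icc a r) (hcont.mono hIccsub)
        · intro x hx
          rw [interior_Icc] at hx
          have hxL : L < x := by
            have := haIcc.1
            have := hx.1
            linarith
          exact ((hdiff x (le_of_lt hxL)).differentiableAt
            (Ici_mem_nhds hxL)).differentiableWithinAt
        · intro x hx
          rw [interior_Icc] at hx
          exact hderiv x hx
      have : g r ≤ g a := hanti ⟨le_refl a, har.le⟩ ⟨har.le, le_refl r⟩ har.le
      exact absurd (this.trans hga) (not_le.2 hgr)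
  intro R hR
  obtain ⟨n, hn⟩ := pow_unbounded_of_one_lt (R / (2 * L)) (by norm_num : (1 : ℝ) < 2)
  exact key n R hR (by rw [div_lt_iff₀ (by linarith : (0:ℝ) < 2*L)] at hn; linarith)
end

section
/- For every real u > 0 and every real c with |c| ≤ 1/2, the series Σ_{m ∈ ℤ} (u + i(c+m))⁻² of complex numbers converges absolutely and satisfies |Σ_{m ∈ ℤ} (u + i(c+m))⁻²| ≥ (u² + c²)⁻¹ − π². -/
open Real

lemma hasSum_half_shift : HasSum (fun n : ℕ => (((n : ℝ) + 1/2) ^ 2)⁻¹) (π ^ 2 / 2) := by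
  set f : ℕ → ℝ := fun n => 1 / (n : ℝ) ^ 2 with hf
  have h : HasSum f (π ^ 2 / 6) := hasSum_zeta_two
  have he : HasSum (fun k : ℕ => f (2 * k)) (π ^ 2 / 24) := by
    have h4 := h.mul_left (1/4)
    have hv : (1:ℝ)/4 * (π ^ 2 / 6) = π ^ 2 / 24 := by ring
    rw [hv] at h4
    convert h4 using 1
    · rfl
    funext k
    simp only [hf]
    push_cast
    rcases Nat.eq_zero_or_pos k with rfl | hk
    · simp
    · have : (k:ℝ) ≠ 0 := Nat.cast_ne_zero.mpr hk.ne'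
      field_simp
      ring
  have hso : Summable (fun k : ℕ => f (2 * k + 1)) :=
    h.summable.comp_injective (fun a b hab => by omega)
  have ho := hso.hasSum
  have htot := HasSum.even_add_odd he ho
  have hval : π ^ 2 / 24 + ∑' k : ℕ, f (2 * k + 1) = π ^ 2 / 6 := htot.unique h
  have ho' : HasSum (fun k : ℕ => f (2 * k + 1)) (π ^ 2 / 8) := by
    have : ∑' k : ℕ, f (2 * k + 1) = π ^ 2 / 8 := by linarith
    rwa [this] at ho
  have h4 := ho'.mul_left 4
  have hv : (4:ℝ) * (π ^ 2 / 8) = π ^ 2 / 2 := by ring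
  rw [hv] at h4
  convert h4 using 1
  · rfl
  funext n
  simp only [hf]
  push_cast
  rw [mul_one_div, eq_div_iff (by positivity), inv_mul_eq_div, div_eq_iff (by positivity)]
  ring

lemma norm_term (u x : ℝ) : ‖(((u : ℂ) + Complex.I * (x : ℂ)) ^ 2)⁻¹‖ = (u ^ 2 + x ^ 2)⁻¹ := by
  rw [norm_inv, norm_pow, mul_comm Complex.I, Complex.sq_norm,
    Complex.normSq_add_mul_I]

/-- The series Σ_{m∈ℤ} (u + i(c+m))⁻² converges absolutely and its sum is bounded below
in modulus by (u² + c²)⁻¹ − π². -/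
theorem spectral_series_lower_bound (u c : ℝ) (hu : 0 < u) (hc : |c| ≤ 1 / 2) :
    Summable (fun m : ℤ => ‖(((u : ℂ) + Complex.I * ((c : ℂ) + (m : ℂ))) ^ 2)⁻¹‖) ∧
      (u ^ 2 + c ^ 2)⁻¹ - Real.pi ^ 2 ≤
        ‖∑' m : ℤ, (((u : ℂ) + Complex.I * ((c : ℂ) + (m : ℂ))) ^ 2)⁻¹‖ := by
  obtain ⟨hc1, hc2⟩ := abs_le.mp hc
  set v : ℤ → ℂ := fun m => (((u : ℂ) + Complex.I * ((c : ℂ) + (m : ℂ))) ^ 2)⁻¹ with hv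
  set H : ℤ → ℝ := fun m => (u ^ 2 + (c + m) ^ 2)⁻¹ with hH
  have hnorm : ∀ m : ℤ, ‖v m‖ = H m := by
    intro m
    have := norm_term u (c + m)
    simpa [hv, hH] using this
  have hHnonneg : ∀ m : ℤ, 0 ≤ H m := fun m => by positivity
  -- bounds for the tail terms
  have hbound_pos : ∀ n : ℕ, H ((n : ℤ) + 1) ≤ (((n : ℝ) + 1/2) ^ 2)⁻¹ := by
    intro n
    apply inv_anti₀ (by positivity)
    have h1 : ((n : ℝ) + 1/2) ≤ c + ((n : ℤ) + 1 : ℤ) := by push_cast; linarith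
    have h2 : (0:ℝ) ≤ (n : ℝ) + 1/2 := by positivity
    nlinarith [pow_le_pow_left₀ h2 h1 2]
  have hbound_neg : ∀ n : ℕ, H (-((n : ℤ) + 1)) ≤ (((n : ℝ) + 1/2) ^ 2)⁻¹ := by
    intro n
    apply inv_anti₀ (by positivity)
    have h1 : ((n : ℝ) + 1/2) ≤ ((n : ℝ) + 1) - c := by linarith
    have h2 : (0:ℝ) ≤ (n : ℝ) + 1/2 := by positivity
    have h3 : (c + (-((n : ℤ) + 1) : ℤ)) ^ 2 = (((n : ℝ) + 1) - c) ^ 2 := by push_cast; ring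
    nlinarith [pow_le_pow_left₀ h2 h1 2]
  have hSh := hasSum_half_shift.summable
  -- summability of H over ℤ
  have hsum_pos : Summable (fun n : ℕ => H n) := by
    rw [← summable_nat_add_iff 1]
    apply Summable.of_nonneg_of_le (fun n => hHnonneg _) _ hSh
    intro n
    have := hbound_pos n
    simpa using this
  have hsum_neg : Summable (fun n : ℕ => H (-((n : ℤ) + 1))) :=
    Summable.of_nonneg_of_le (fun n => hHnonneg _) hbound_neg hSh
  have hHsum : Summable H := Summable.of_nat_of_neg_add_one (f := H) hsum_pos hsum_neg
  have hvsum : Summable v := by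
    apply Summable.of_norm
    simpa only [hnorm] using hHsum
  have hveq : (fun m : ℤ => ‖(((u : ℂ) + Complex.I * ((c : ℂ) + (m : ℂ))) ^ 2)⁻¹‖)
      = fun m : ℤ => ‖v m‖ := by simp only [hv]
  clear_value v H
  rw [hveq]
  constructor
  · simp only [hnorm]
    exact hHsum
  -- the tail function
  set F : ℤ → ℝ := fun m => if m = 0 then 0 else H m with hF
  have hFnonneg : ∀ m, 0 ≤ F m := by
    intro m
    by_cases h : m = 0
    · simp [hF, h]
    · simpa [hF, h] using hHnonneg m
  have hFle : ∀ m, F m ≤ H m := by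
    intro m
    by_cases h : m = 0
    · simpa [hF, h] using hHnonneg m
    · simp [hF, h]
  have hFsum : Summable F := Summable.of_nonneg_of_le hFnonneg hFle hHsum
  have hFsum_pos : Summable (fun n : ℕ => F n) :=
    Summable.of_nonneg_of_le (fun n => hFnonneg _) (fun n => hFle _) hsum_pos
  have hFsum_neg : Summable (fun n : ℕ => F (-((n:ℤ) + 1))) :=
    Summable.of_nonneg_of_le (fun n => hFnonneg _) (fun n => hFle _) hsum_neg
  clear_value F
  -- tail bound: ∑' F ≤ π²
  have htail : ∑' m : ℤ, F m ≤ π ^ 2 := by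
    rw [tsum_of_nat_of_neg_add_one hFsum_pos hFsum_neg]
    have hA : ∑' n : ℕ, F n ≤ π ^ 2 / 2 := by
      rw [hFsum_pos.tsum_eq_zero_add]
      have h0 : F ((0:ℕ):ℤ) = 0 := by simp [hF]
      rw [h0, zero_add]
      rw [← hasSum_half_shift.tsum_eq]
      apply Summable.tsum_le_tsum _ ((summable_nat_add_iff (f := fun n : ℕ => F (n:ℤ)) 1).2 hFsum_pos) hSh
      intro n
      refine le_trans (hFle _) ?_
      have hcast : (((n + 1 : ℕ)) : ℤ) = (n : ℤ) + 1 := by push_cast; ring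
      rw [hcast]
      exact hbound_pos n
    have hB : ∑' n : ℕ, F (-((n:ℤ) + 1)) ≤ π ^ 2 / 2 := by
      rw [← hasSum_half_shift.tsum_eq]
      apply Summable.tsum_le_tsum _ hFsum_neg hSh
      intro n
      exact le_trans (hFle _) (hbound_neg n)
    linarith
  -- split off the m = 0 term
  have hsplit : ∑' m : ℤ, v m = v 0 + ∑' m : ℤ, if m = 0 then 0 else v m :=
    Summable.tsum_eq_add_tsum_ite hvsum 0
  have hv0 : ‖v 0‖ = (u ^ 2 + c ^ 2)⁻¹ := by
    have := hnorm 0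
    simpa [hH] using this
  have hvtail_sum : Summable (fun m : ℤ => if m = 0 then 0 else v m) := by
    apply Summable.of_norm
    apply Summable.of_nonneg_of_le (fun m => norm_nonneg _) _ hFsum
    intro m
    by_cases h : m = 0 <;> simp [h, hF, hnorm m]
  have hR : ‖∑' m : ℤ, if m = 0 then 0 else v m‖ ≤ π ^ 2 := by
    refine le_trans (norm_tsum_le_tsum_norm ?_) (le_trans (Summable.tsum_le_tsum ?_ ?_ hFsum) htail)
    · apply Summable.of_nonneg_of_le (fun m => norm_nonneg _) _ hFsum
      intro m
      by_cases h : m = 0 <;> simp [h, hF, hnorm m]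
    · intro m
      by_cases h : m = 0 <;> simp [h, hF, hnorm m]
    · apply Summable.of_nonneg_of_le (fun m => norm_nonneg _) _ hFsum
      intro m
      by_cases h : m = 0 <;> simp [h, hF, hnorm m]
  have htri : ‖v 0‖ ≤ ‖∑' m : ℤ, v m‖ + ‖∑' m : ℤ, if m = 0 then 0 else v m‖ := by
    have : v 0 = (∑' m : ℤ, v m) - ∑' m : ℤ, (if m = 0 then 0 else v m) := by
      rw [hsplit]; ring
    rw [this]
    exact norm_sub_le _ _
  rw [hv0] at htri
  linarith
end

section
/- Let N ∈ ℕ, R₀ > 0, and let Φ : {x ∈ ℝ³ : |x| > R₀} → (N×N Hermitian complex matrices) be continuous with sup_x ‖Φ(x)‖ < ∞. Suppose that for every m ∈ ℕ and every ε > 0 there exists R such that |tr(Φ(p)ᵐ) − tr(Φ(q)ᵐ)| ≤ ε for all p, q with |p| ≥ R and |q| ≥ R. Then there exist real numbers μ₁ ≤ μ₂ ≤ … ≤ μ_N such that, writing a₁(x) ≤ … ≤ a_N(x) for the eigenvalues of Φ(x) in nondecreasing order, a_j(x) → μ_j as |x| → ∞ for each j. -/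
open Filter
open scoped Matrix

noncomputable section

abbrev Spc : Type := EuclideanSpace ℝ (Fin 3)

abbrev Mat (N : ℕ) : Type := Matrix (Fin N) (Fin N) ℂ

/-- Frobenius norm of a matrix. -/
def frob {N : ℕ} (M : Mat N) : ℝ := Real.sqrt (∑ a, ∑ b, ‖M a b‖ ^ 2)

/-- `a` is the nondecreasing list of eigenvalues (with multiplicity) of the Hermitian matrix `H`. -/
def IsEigList {N : ℕ} (H : Mat N) (a : Fin N → ℝ) : Prop :=
  Monotone a ∧ ∃ U : Mat N, star U * U = 1 ∧
    H = U * Matrix.diagonal (fun j => (a j : ℂ)) * star U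

namespace SortedEig

open Finset

lemma multiset_eq_of_moments {N : ℕ} {a b : Fin N → ℝ}
    (h : ∀ m : ℕ, ∑ j, a j ^ m = ∑ j, b j ^ m) :
    Multiset.map a Finset.univ.val = Multiset.map b Finset.univ.val := by
  classical
  set s : Finset ℝ := (univ.image a) ∪ (univ.image b) with hs
  set k := s.card with hk
  set v : Fin k → ℝ := fun i => (s.equivFin.symm i : ℝ) with hv
  have hvinj : Function.Injective v := fun i i' hii =>
    s.equivFin.symm.injective (Subtype.ext hii)
  have key : ∀ (f : Fin N → ℝ), (∀ j, f j ∈ s) → ∀ m : ℕ,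
      ∑ j, f j ^ m = ∑ t ∈ s, ((univ.filter (fun j => f j = t)).card : ℝ) * t ^ m := by
    intro f hf m
    have hsub : univ.image f ⊆ s := by
      intro t ht; obtain ⟨j, _, rfl⟩ := mem_image.mp ht; exact hf j
    have hzero : ∀ t ∈ s, t ∉ univ.image f →
        (univ.filter (fun j => f j = t)).card • t ^ m = 0 := by
      intro t _ ht
      have : (univ.filter (fun j => f j = t)).card = 0 := by
        rw [Finset.card_eq_zero, Finset.filter_eq_empty_iff]
        intro j _ hj; exact ht (mem_image.mpr ⟨j, mem_univ j, hj⟩)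
      simp [this]
    calc ∑ j, f j ^ m
        = ∑ t ∈ univ.image f, (univ.filter (fun j => f j = t)).card • t ^ m :=
          Finset.sum_comp (fun t => t ^ m) f
      _ = ∑ t ∈ s, (univ.filter (fun j => f j = t)).card • t ^ m :=
          Finset.sum_subset hsub hzero
      _ = _ := by simp [nsmul_eq_mul]
  have has : ∀ j, a j ∈ s := fun j => mem_union_left _ (mem_image_of_mem a (mem_univ j))
  have hbs : ∀ j, b j ∈ s := fun j => mem_union_right _ (mem_image_of_mem b (mem_univ j))
  -- the coefficient vector
  set e : Fin k → ℝ := fun i =>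
    ((univ.filter (fun j => a j = v i)).card : ℝ) - (univ.filter (fun j => b j = v i)).card with he
  have hsum : ∀ m : ℕ, ∑ i, v i ^ m * e i = 0 := by
    intro m
    have h1 := key a has m
    have h2 := key b hbs m
    have h3 : ∑ t ∈ s, (((univ.filter (fun j => a j = t)).card : ℝ)
        - (univ.filter (fun j => b j = t)).card) * t ^ m = 0 := by
      simp only [sub_mul, Finset.sum_sub_distrib]
      rw [← h1, ← h2, h m, sub_self]
    have h4 : ∑ t ∈ s, (((univ.filter (fun j => a j = t)).card : ℝ)
        - (univ.filter (fun j => b j = t)).card) * t ^ m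
        = ∑ i, v i ^ m * e i := by
      rw [← Finset.sum_coe_sort s]
      exact (Fintype.sum_equiv s.equivFin.symm _ _ (fun i => by simp [hv, he, mul_comm])).symm
    rw [← h4, h3]
  have hmul : (Matrix.vandermonde v)ᵀ.mulVec e = 0 := by
    funext m
    have : (Matrix.vandermonde v)ᵀ.mulVec e m = ∑ i, v i ^ (m : ℕ) * e i := by
      simp [Matrix.mulVec, Matrix.vandermonde, dotProduct]
    rw [this, hsum]; rfl
  have hdet : (Matrix.vandermonde v)ᵀ.det ≠ 0 := by
    rw [Matrix.det_transpose]
    exact Matrix.det_vandermonde_ne_zero_iff.mpr hvinj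
  have he0 : e = 0 := Matrix.eq_zero_of_mulVec_eq_zero hdet hmul
  have hcount : ∀ t : ℝ, (univ.filter (fun j => a j = t)).card
      = (univ.filter (fun j => b j = t)).card := by
    intro t
    by_cases hts : t ∈ s
    · have := congrFun he0 (s.equivFin ⟨t, hts⟩)
      have hvt : v (s.equivFin ⟨t, hts⟩) = t := by simp [hv]
      rw [he] at this
      simp only [Pi.zero_apply, hvt] at this
      exact_mod_cast sub_eq_zero.mp this
    · have hae : (univ.filter (fun j => a j = t)) = ∅ := by
        rw [Finset.filter_eq_empty_iff]; intro j _ hj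
        exact hts (hj ▸ has j)
      have hbe : (univ.filter (fun j => b j = t)) = ∅ := by
        rw [Finset.filter_eq_empty_iff]; intro j _ hj
        exact hts (hj ▸ hbs j)
      rw [hae, hbe]
  ext t
  rw [Multiset.count_map, Multiset.count_map]
  have : ∀ f : Fin N → ℝ, Multiset.filter (fun j => t = f j) univ.val
      = (univ.filter (fun j => f j = t)).val := by
    intro f
    rw [Finset.filter_val]
    exact Multiset.filter_congr (fun j _ => by constructor <;> exact fun h' => h'.symm)
  rw [this a, this b]
  exact hcount t

lemma monotone_eq_of_moments {N : ℕ} {a b : Fin N → ℝ} (ha : Monotone a) (hb : Monotone b)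
    (h : ∀ m : ℕ, ∑ j, a j ^ m = ∑ j, b j ^ m) : a = b := by
  have hm := multiset_eq_of_moments h
  have h' : List.Perm (List.ofFn a) (List.ofFn b) := by
    rw [← Multiset.coe_eq_coe]
    simpa only [Fin.univ_val_map] using hm
  exact List.ofFn_injective (List.Perm.eq_of_sortedLE
    (List.sortedLE_ofFn_iff.mpr ha) (List.sortedLE_ofFn_iff.mpr hb) h')

lemma trace_pow {N : ℕ} {H : Mat N} {a : Fin N → ℝ} (h : IsEigList H a) (m : ℕ) :
    (H ^ m).trace = ∑ j, (a j : ℂ) ^ m := by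
  obtain ⟨-, U, hU, hH⟩ := h
  have hU' : U * star U = 1 := mul_eq_one_comm.mp hU
  set D : Mat N := Matrix.diagonal (fun j => (a j : ℂ)) with hD
  have hpow : H ^ m = U * D ^ m * star U := by
    induction m with
    | zero => simp [hU', pow_zero]
    | succ n ih =>
      rw [pow_succ, ih, hH, pow_succ]
      calc U * D ^ n * star U * (U * D * star U)
          = U * D ^ n * ((star U * U) * (D * star U)) := by
            simp only [Matrix.mul_assoc]
        _ = U * D ^ n * (D * star U) := by rw [hU, Matrix.one_mul]
        _ = U * (D ^ n * D) * star U := by simp only [Matrix.mul_assoc]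
  rw [hpow, Matrix.trace_mul_comm (U * D ^ m) (star U), ← Matrix.mul_assoc, hU,
    Matrix.one_mul, hD, Matrix.diagonal_pow, Matrix.trace_diagonal]
  rfl

lemma unique {N : ℕ} {H : Mat N} {a b : Fin N → ℝ}
    (ha : IsEigList H a) (hb : IsEigList H b) : a = b := by
  apply monotone_eq_of_moments ha.1 hb.1
  intro m
  have h1 := trace_pow ha m
  have h2 := trace_pow hb m
  have hc : ((∑ j, a j ^ m : ℝ) : ℂ) = ((∑ j, b j ^ m : ℝ) : ℂ) := by
    push_cast
    rw [← h1, ← h2]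
  exact_mod_cast hc

lemma abs_le_frob {N : ℕ} {H : Mat N} {a : Fin N → ℝ}
    (h : IsEigList H a) (hH : Hᴴ = H) (j : Fin N) : |a j| ≤ frob H := by
  have h2 := trace_pow h 2
  have htr2 : (H ^ 2).trace = ((∑ i, ∑ l, ‖H i l‖ ^ 2 : ℝ) : ℂ) := by
    rw [pow_two, Matrix.trace]
    push_cast
    refine Finset.sum_congr rfl fun i _ => ?_
    rw [Matrix.diag_apply, Matrix.mul_apply]
    refine Finset.sum_congr rfl fun l _ => ?_
    have hc : H i l = (starRingEnd ℂ) (H l i) := by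
      conv_lhs => rw [← hH]
      rfl
    rw [hc, ← Complex.normSq_eq_conj_mul_self]
    rw [Complex.normSq_eq_norm_sq]
    push_cast
    rw [Complex.norm_conj]
  have hreal : ∑ i, (a i) ^ 2 = ∑ i, ∑ l, ‖H i l‖ ^ 2 := by
    have := h2.symm.trans htr2
    exact_mod_cast this
  have hle : (a j) ^ 2 ≤ ∑ i, ∑ l, ‖H i l‖ ^ 2 := by
    rw [← hreal]
    exact Finset.single_le_sum (fun i _ => sq_nonneg (a i)) (Finset.mem_univ j)
  calc |a j| = Real.sqrt ((a j) ^ 2) := (Real.sqrt_sq_eq_abs _).symm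
    _ ≤ frob H := Real.sqrt_le_sqrt hle

lemma exists_sorted_eigList {N : ℕ} {H : Mat N} (hH : H.IsHermitian) :
    ∃ a : Fin N → ℝ, IsEigList H a := by
  classical
  set ev := hH.eigenvalues with hev
  set σ := Tuple.sort ev with hσ
  set c : Fin N → ℂ := fun i => (ev i : ℂ) with hc
  set P : Mat N := (σ⁻¹).toPEquiv.toMatrix with hP
  set Q : Mat N := σ.toPEquiv.toMatrix with hQ
  have hstarP : star P = Q := by
    ext i j
    simp only [Matrix.star_apply, hP, hQ, PEquiv.toMatrix_apply, Equiv.toPEquiv_apply,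
      Option.mem_some_iff, apply_ite (star : ℂ → ℂ), star_one, star_zero]
    have hiff : (σ⁻¹ j = i) ↔ (σ i = j) := by
      constructor <;> intro hh <;> simp [← hh]
    rw [if_congr hiff rfl rfl]
  have hQP : Q * P = 1 := by
    rw [hP, hQ, ← PEquiv.toMatrix_trans, ← Equiv.toPEquiv_trans]
    rw [show σ.trans σ⁻¹ = Equiv.refl (Fin N) from Equiv.self_trans_symm σ,
      Equiv.toPEquiv_refl, PEquiv.toMatrix_refl]
  have hPDQ : P * Matrix.diagonal (c ∘ σ) * Q = Matrix.diagonal c := by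
    rw [hP, hQ, PEquiv.toMatrix_toPEquiv_mul, PEquiv.mul_toMatrix_toPEquiv,
      Matrix.submatrix_submatrix]
    have h1 : (⇑σ⁻¹ ∘ id) = ⇑(σ⁻¹ : Equiv.Perm (Fin N)) := by funext x; rfl
    have h2 : (id ∘ ⇑σ.symm) = ⇑(σ⁻¹ : Equiv.Perm (Fin N)) := by funext x; rfl
    rw [h1, h2, Matrix.submatrix_diagonal_equiv]
    have h3 : ((c ∘ ⇑σ) ∘ ⇑(σ⁻¹ : Equiv.Perm (Fin N))) = c := by
      funext i; simp [hc]
    rw [h3]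
  set U₀ : Mat N := (hH.eigenvectorUnitary : Mat N) with hU₀def
  have hU₀ : star U₀ * U₀ = 1 := hH.eigenvectorUnitary.prop.1
  refine ⟨ev ∘ σ, Tuple.monotone_sort ev, U₀ * P, ?_, ?_⟩
  · rw [StarMul.star_mul, Matrix.mul_assoc, ← Matrix.mul_assoc (star U₀) U₀ P, hU₀,
      Matrix.one_mul, hstarP, hQP]
  · have hdiag : (fun j => (((ev ∘ σ) j : ℝ) : ℂ)) = c ∘ σ := rfl
    rw [hdiag, StarMul.star_mul, hstarP]
    calc H = U₀ * Matrix.diagonal c * star U₀ := by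
          have := hH.spectral_theorem
          simp only [Unitary.conjStarAlgAut_apply, Unitary.coe_star] at this
          exact this
        _ = U₀ * (P * Matrix.diagonal (c ∘ ⇑σ) * Q) * star U₀ := by rw [hPDQ]
        _ = U₀ * P * Matrix.diagonal (c ∘ ⇑σ) * (Q * star U₀) := by
          simp only [Matrix.mul_assoc]

end SortedEig

/-- Cauchyness at infinity of all moment traces of a bounded Hermitian family implies
convergence of the sorted eigenvalue lists. -/
theorem sorted_eigenvalues_converge_of_traces_cauchy (N : ℕ) (R₀ : ℝ) (hR₀ : 0 < R₀)
    (Φ : Spc → Mat N)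
    (hcont : ∀ a b, ContinuousOn (fun x => Φ x a b) {x : Spc | R₀ < ‖x‖})
    (hherm : ∀ x : Spc, R₀ < ‖x‖ → (Φ x)ᴴ = Φ x)
    (hbdd : ∃ C : ℝ, ∀ x : Spc, R₀ < ‖x‖ → frob (Φ x) ≤ C)
    (htr : ∀ m : ℕ, ∀ ε > 0, ∃ R : ℝ, ∀ p q : Spc, R ≤ ‖p‖ → R ≤ ‖q‖ →
      R₀ < ‖p‖ → R₀ < ‖q‖ → ‖(Φ p ^ m).trace - (Φ q ^ m).trace‖ ≤ ε) :
    ∃ μ : Fin N → ℝ, Monotone μ ∧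
      ∀ a : Spc → Fin N → ℝ, (∀ x : Spc, R₀ < ‖x‖ → IsEigList (Φ x) (a x)) →
        ∀ j, Tendsto (fun x => a x j) (comap (fun x : Spc => ‖x‖) atTop) (nhds (μ j)) := by
  classical
  obtain ⟨C, hC⟩ := hbdd
  set C' : ℝ := max C 0 with hC'
  set l : Filter Spc := comap (fun x : Spc => ‖x‖) atTop with hl
  -- basic facts about the filter
  have hmem : ∀ R : ℝ, {x : Spc | R ≤ ‖x‖} ∈ l := fun R =>
    preimage_mem_comap (Ici_mem_atTop R)
  set e₀ : Spc := EuclideanSpace.single (0 : Fin 3) (1 : ℝ) with he₀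
  have hne₀ : ‖e₀‖ = 1 := by rw [he₀, EuclideanSpace.norm_single]; simp
  have hray : Tendsto (fun r : ℝ => r • e₀) atTop l := by
    rw [hl, tendsto_comap_iff]
    have : (fun r : ℝ => ‖r • e₀‖) = fun r : ℝ => |r| := by
      funext r; rw [norm_smul, hne₀, mul_one, Real.norm_eq_abs]
    rw [Function.comp_def, this]
    exact tendsto_abs_atTop_atTop
  have hlne : l.NeBot := neBot_of_le (f := map (fun r : ℝ => r • e₀) atTop) hray
  -- limits of traces
  have htrlim : ∀ m : ℕ, ∃ T : ℂ, Tendsto (fun x => (Φ x ^ m).trace) l (nhds T) := by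
    intro m
    have hcau : Cauchy (map (fun x => (Φ x ^ m).trace) l) := by
      rw [Metric.cauchy_iff]
      refine ⟨map_neBot, fun ε hε => ?_⟩
      obtain ⟨R, hR⟩ := htr m (ε / 2) (by linarith)
      refine ⟨(fun x => (Φ x ^ m).trace) '' {x : Spc | max R (R₀ + 1) ≤ ‖x‖},
        image_mem_map (hmem _), ?_⟩
      rintro _ ⟨p, hp, rfl⟩ _ ⟨q, hq, rfl⟩
      have hp1 : R ≤ ‖p‖ := le_trans (le_max_left _ _) hp
      have hp2 : R₀ < ‖p‖ := lt_of_lt_of_le (by linarith) (le_trans (le_max_right _ _) hp)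
      have hq1 : R ≤ ‖q‖ := le_trans (le_max_left _ _) hq
      have hq2 : R₀ < ‖q‖ := lt_of_lt_of_le (by linarith) (le_trans (le_max_right _ _) hq)
      calc dist ((Φ p ^ m).trace) ((Φ q ^ m).trace)
          = ‖(Φ p ^ m).trace - (Φ q ^ m).trace‖ := dist_eq_norm _ _
        _ ≤ ε / 2 := hR p q hp1 hq1 hp2 hq2
        _ < ε := by linarith
    exact CompleteSpace.complete hcau
  choose T hT using htrlim
  -- the chosen sorted eigenvalue function
  have hex : ∀ x : Spc, ∃ f : Fin N → ℝ, R₀ < ‖x‖ → IsEigList (Φ x) f := by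
    intro x
    by_cases h : R₀ < ‖x‖
    · obtain ⟨f, hf⟩ := SortedEig.exists_sorted_eigList (hherm x h)
      exact ⟨f, fun _ => hf⟩
    · exact ⟨0, fun h' => absurd h' h⟩
  choose a₀ ha₀ using hex
  -- the compact set of candidate eigenvalue lists
  set K : Set (Fin N → ℝ) := {f | Monotone f ∧ ∀ j, |f j| ≤ C'} with hK
  have hKc : IsCompact K := by
    have hsub : K ⊆ Set.univ.pi (fun _ : Fin N => Set.Icc (-C') C') := by
      intro f hf j _
      exact abs_le.mp (hf.2 j)
    refine IsCompact.of_isClosed_subset (isCompact_univ_pi fun _ => isCompact_Icc) ?_ hsub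
    have h1 : IsClosed {f : Fin N → ℝ | Monotone f} := by
      have : {f : Fin N → ℝ | Monotone f}
          = ⋂ (p : Fin N × Fin N) (_ : p.1 ≤ p.2), {f | f p.1 ≤ f p.2} := by
        ext f
        simp only [Set.mem_setOf_eq, Set.mem_iInter]
        exact ⟨fun hf p hp => hf hp, fun hf i j hij => hf (i, j) hij⟩
      rw [this]
      exact isClosed_iInter fun p => isClosed_iInter fun _ =>
        isClosed_le (continuous_apply p.1) (continuous_apply p.2)
    have h2 : IsClosed {f : Fin N → ℝ | ∀ j, |f j| ≤ C'} := by
      have : {f : Fin N → ℝ | ∀ j, |f j| ≤ C'} = ⋂ j, {f | |f j| ≤ C'} := by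
        ext f; simp
      rw [this]
      exact isClosed_iInter fun j =>
        isClosed_le (continuous_abs.comp (continuous_apply j)) continuous_const
    exact h1.inter h2
  have h0K : (0 : Fin N → ℝ) ∈ K := by
    refine ⟨monotone_const, fun j => ?_⟩
    simp [hC', le_max_right]
  have ha₀K : ∀ x : Spc, R₀ < ‖x‖ → a₀ x ∈ K := by
    intro x hx
    refine ⟨(ha₀ x hx).1, fun j => ?_⟩
    calc |a₀ x j| ≤ frob (Φ x) := SortedEig.abs_le_frob (ha₀ x hx) (hherm x hx) j
      _ ≤ C := hC x hx
      _ ≤ C' := le_max_left _ _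
  set g : Spc → ↥K := fun x =>
    if h : R₀ < ‖x‖ then ⟨a₀ x, ha₀K x h⟩ else ⟨0, h0K⟩ with hg
  -- the moment map
  set P : (Fin N → ℝ) → ℕ → ℝ := fun f m => ∑ j, f j ^ m with hPdef
  have hPcont : Continuous P := by
    refine continuous_pi fun m => ?_
    exact continuous_finset_sum _ fun j _ => (continuous_apply j).pow m
  have hPinj : Function.Injective (fun f : ↥K => P (f : Fin N → ℝ)) := by
    rintro ⟨f, hf⟩ ⟨f', hf'⟩ hff
    refine Subtype.ext (SortedEig.monotone_eq_of_moments hf.1 hf'.1 fun m => ?_)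
    exact congrFun hff m
  have : CompactSpace ↥K := isCompact_iff_compactSpace.mp hKc
  have hPemb : Topology.IsClosedEmbedding (fun f : ↥K => P (f : Fin N → ℝ)) :=
    (hPcont.comp continuous_subtype_val).isClosedEmbedding hPinj
  -- moment convergence along l
  have hmomlim : ∀ m : ℕ, Tendsto (fun x => P (a₀ x) m) l (nhds ((T m).re)) := by
    intro m
    have h1 : Tendsto (fun x => ((Φ x ^ m).trace).re) l (nhds ((T m).re)) :=
      (Complex.continuous_re.tendsto _).comp (hT m)
    refine Tendsto.congr' ?_ h1
    filter_upwards [hmem (R₀ + 1)] with x hx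
    have hx' : R₀ < ‖x‖ := lt_of_lt_of_le (by linarith) hx
    have := SortedEig.trace_pow (ha₀ x hx') m
    rw [this]
    have : (∑ j, ((a₀ x j : ℂ)) ^ m) = ((∑ j, a₀ x j ^ m : ℝ) : ℂ) := by push_cast; rfl
    rw [this, Complex.ofReal_re]
  -- extract a limit point along a sequence going to infinity
  set xseq : ℕ → Spc := fun n => (R₀ + 1 + n) • e₀ with hxseq
  have hxnorm : ∀ n : ℕ, ‖xseq n‖ = R₀ + 1 + n := by
    intro n
    rw [hxseq, norm_smul, hne₀, mul_one, Real.norm_eq_abs, abs_of_pos (by positivity)]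
  have hxR₀ : ∀ n : ℕ, R₀ < ‖xseq n‖ := by
    intro n; rw [hxnorm n]
    have : (0:ℝ) ≤ n := Nat.cast_nonneg n
    linarith
  have hxl : Tendsto xseq atTop l := by
    rw [hl, tendsto_comap_iff]
    have heq : ((fun x : Spc => ‖x‖) ∘ xseq) = fun n : ℕ => R₀ + 1 + n := by
      funext n; exact hxnorm n
    rw [heq]
    exact tendsto_atTop_add_const_left _ _ tendsto_natCast_atTop_atTop
  obtain ⟨μ, hμK, φ, hφ, hφlim⟩ :=
    hKc.tendsto_subseq (x := fun n => a₀ (xseq n)) (fun n => ha₀K _ (hxR₀ n))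
  -- identify the moments of μ
  have hxφl : Tendsto (fun n => xseq (φ n)) atTop l :=
    hxl.comp hφ.tendsto_atTop
  have hPμ : ∀ m : ℕ, P μ m = (T m).re := by
    intro m
    have h1 : Tendsto (fun n => P (a₀ (xseq (φ n))) m) atTop (nhds ((T m).re)) :=
      (hmomlim m).comp hxφl
    have h2 : Tendsto (fun n => P (a₀ (xseq (φ n))) m) atTop (nhds (P μ m)) := by
      have := ((continuous_apply m).comp hPcont).tendsto μ
      exact this.comp hφlim
    exact tendsto_nhds_unique h2 h1
  -- convergence of g to μ via the embedding
  have hgK : Tendsto g l (nhds (⟨μ, hμK⟩ : ↥K)) := by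
    rw [hPemb.toIsEmbedding.tendsto_nhds_iff]
    rw [tendsto_pi_nhds]
    intro m
    have h1 : Tendsto (fun x => P (a₀ x) m) l (nhds (P μ m)) := by
      rw [hPμ m]; exact hmomlim m
    refine Tendsto.congr' ?_ h1
    filter_upwards [hmem (R₀ + 1)] with x hx
    have hx' : R₀ < ‖x‖ := lt_of_lt_of_le (by linarith) hx
    simp only [hg, Function.comp_apply, dif_pos hx']
  have ha₀lim : Tendsto a₀ l (nhds μ) := by
    have h1 : Tendsto (fun x => ((g x : Fin N → ℝ))) l (nhds μ) :=
      (continuous_subtype_val.tendsto _).comp hgK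
    refine Tendsto.congr' ?_ h1
    filter_upwards [hmem (R₀ + 1)] with x hx
    have hx' : R₀ < ‖x‖ := lt_of_lt_of_le (by linarith) hx
    simp only [hg, dif_pos hx']
  refine ⟨μ, hμK.1, fun a ha j => ?_⟩
  have h1 : Tendsto (fun x => a₀ x j) l (nhds (μ j)) :=
    ((continuous_apply j).tendsto _).comp ha₀lim
  refine Tendsto.congr' ?_ h1
  filter_upwards [hmem (R₀ + 1)] with x hx
  have hx' : R₀ < ‖x‖ := lt_of_lt_of_le (by linarith) hx
  rw [SortedEig.unique (ha₀ x hx') (ha x hx')]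
end
end
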